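/- Let ψ₁, ψ₂, ψ₃, ψ₄ : ℝ → ℂ be twice continuously differentiable with ψ₁(y) and ψ₄(y) purely imaginary for all y, and define the 3×3 matrix-valued function m₁(y) with rows (ψ₁, ψ₂, ψ₃), (-conj ψ₂, ψ₁, -conj ψ₃), (-conj ψ₃, ψ₃, ψ₄). For (y,z) ∈ ℝ × ℂ define 𝒰(y,z) = -iz·Λ + i·[Λ, m₁(y)] and 𝒱(y,z) = 4iz²·Λ - 4iz·[Λ, m₁(y)] + 4·m₁'(y) - iy·Λ, where [A,B] = AB - BA. Then the zero-curvature equation ∂_z 𝒰 - ∂_y 𝒱 + [𝒰, 𝒱] = 0 holds for all y ∈ ℝ and all z ∈ ℂ if and only if the four scalar equations ψ₁'' + 2i·(ψ₃·conj ψ₃)' = 0, ψ₂'' - 4i·ψ₃·ψ₃' = 0, ψ₃'' - 2i·conj(ψ₃)·ψ₂' + ψ₃·(y + 2i·ψ₁' - 2i·ψ₄') = 0, and ψ₄'' - 4i·(ψ₃·conj ψ₃)' = 0 hold for all y ∈ ℝ. -/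

import Mathlib

open Complex Matrix ComplexConjugate

noncomputable section

/-- The diagonal matrix `Λ = diag(1,1,-1)`. -/
def Lam : Matrix (Fin 3) (Fin 3) ℂ := !![1, 0, 0; 0, 1, 0; 0, 0, -1]

/-- The coefficient matrix `m₁(y)` built from the scalar functions `ψ₁, ψ₂, ψ₃, ψ₄`. -/
def m1 (ψ₁ ψ₂ ψ₃ ψ₄ : ℝ → ℂ) (y : ℝ) : Matrix (Fin 3) (Fin 3) ℂ :=
  !![ψ₁ y, ψ₂ y, ψ₃ y;
     -conj (ψ₂ y), ψ₁ y, -conj (ψ₃ y);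
     -conj (ψ₃ y), ψ₃ y, ψ₄ y]

/-- Entrywise `y`-derivative of `m₁`. -/
def m1' (ψ₁ ψ₂ ψ₃ ψ₄ : ℝ → ℂ) (y : ℝ) : Matrix (Fin 3) (Fin 3) ℂ :=
  Matrix.of fun i j => deriv (fun y' => m1 ψ₁ ψ₂ ψ₃ ψ₄ y' i j) y

/-- `𝒰(y,z) = -iz·Λ + i·[Λ, m₁(y)]`. -/
def Umat (ψ₁ ψ₂ ψ₃ ψ₄ : ℝ → ℂ) (y : ℝ) (z : ℂ) : Matrix (Fin 3) (Fin 3) ℂ :=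
  (-Complex.I * z) • Lam +
    Complex.I • (Lam * m1 ψ₁ ψ₂ ψ₃ ψ₄ y - m1 ψ₁ ψ₂ ψ₃ ψ₄ y * Lam)

/-- `𝒱(y,z) = 4iz²·Λ - 4iz·[Λ, m₁(y)] + 4·m₁'(y) - iy·Λ`. -/
def Vmat (ψ₁ ψ₂ ψ₃ ψ₄ : ℝ → ℂ) (y : ℝ) (z : ℂ) : Matrix (Fin 3) (Fin 3) ℂ :=
  (4 * Complex.I * z ^ 2) • Lam -
    (4 * Complex.I * z) • (Lam * m1 ψ₁ ψ₂ ψ₃ ψ₄ y - m1 ψ₁ ψ₂ ψ₃ ψ₄ y * Lam) +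
    (4 : ℂ) • m1' ψ₁ ψ₂ ψ₃ ψ₄ y - (Complex.I * (y : ℂ)) • Lam

/-- Entrywise `z`-derivative of `𝒰`. -/
def DzU (ψ₁ ψ₂ ψ₃ ψ₄ : ℝ → ℂ) (y : ℝ) (z : ℂ) : Matrix (Fin 3) (Fin 3) ℂ :=
  Matrix.of fun i j => deriv (fun z' : ℂ => Umat ψ₁ ψ₂ ψ₃ ψ₄ y z' i j) z

/-- Entrywise `y`-derivative of `𝒱`. -/
def DyV (ψ₁ ψ₂ ψ₃ ψ₄ : ℝ → ℂ) (y : ℝ) (z : ℂ) : Matrix (Fin 3) (Fin 3) ℂ :=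
  Matrix.of fun i j => deriv (fun y' : ℝ => Vmat ψ₁ ψ₂ ψ₃ ψ₄ y' z i j) y

/-! The `z`-dependence of `∂_z𝒰 - ∂_y𝒱 + [𝒰, 𝒱]` cancels in any `ℂ`-algebra, leaving
`-4 m₁'' + 4i [[Λ, m₁], m₁'] + y [[Λ, m₁], Λ]`. Since conjugation commutes with `d/dy`, the
derivatives of `m₁` keep its shape, and because `ψ₁'`, `ψ₄'` are purely imaginary the whole matrix
is `-4 m₁` built from the left-hand sides of the four scalar equations; it vanishes iff they do. -/

theorem zeroCurvature_identity {A : Type*} [Ring A] [Algebra ℂ A] (L M M' M'' : A) (y z : ℂ) :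
    (-I) • L - ((-(4 * I * z)) • (L * M' - M' * L) + (4 : ℂ) • M'' - I • L) +
      (((-I * z) • L + I • (L * M - M * L)) *
        ((4 * I * z ^ 2) • L - (4 * I * z) • (L * M - M * L) + (4 : ℂ) • M' - (I * y) • L) -
       ((4 * I * z ^ 2) • L - (4 * I * z) • (L * M - M * L) + (4 : ℂ) • M' - (I * y) • L) *
        ((-I * z) • L + I • (L * M - M * L))) =
      (-4 : ℂ) • M'' + (4 * I) • ((L * M - M * L) * M' - M' * (L * M - M * L)) +
        y • ((L * M - M * L) * L - L * (L * M - M * L)) := by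
  simp only [mul_add, add_mul, mul_sub, sub_mul, smul_mul_assoc, mul_smul_comm, mul_assoc]
  match_scalars <;> ring_nf <;> simp only [I_sq] <;> ring

lemma deriv_conj (f : ℝ → ℂ) (y : ℝ) : deriv (fun t => conj (f t)) y = conj (deriv f y) :=
  deriv.star

lemma conj_deriv_of_re_eq_zero {f : ℝ → ℂ} (hf : ∀ t, (f t).re = 0) (y : ℝ) :
    conj (deriv f y) = -deriv f y := by
  have hconj : (fun t => conj (f t)) = fun t => -f t := by
    funext t
    apply Complex.ext <;> simp [hf t]
  rw [← deriv_conj, hconj, deriv.fun_neg]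

lemma deriv_mul_conj {f : ℝ → ℂ} {y : ℝ} (hf : DifferentiableAt ℝ f y) :
    deriv (fun t => f t * conj (f t)) y = deriv f y * conj (f y) + f y * conj (deriv f y) :=
  (hf.hasDerivAt.mul hf.hasDerivAt.star).deriv

lemma hasDerivAt_commutator_apply {n : Type*} [Fintype n] {M : ℝ → Matrix n n ℂ}
    {M' : Matrix n n ℂ} {y : ℝ} (A : Matrix n n ℂ)
    (hM : ∀ i j, HasDerivAt (fun t => M t i j) (M' i j) y) (i j : n) :
    HasDerivAt (fun t => (A * M t - M t * A) i j) ((A * M' - M' * A) i j) y := by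
  simp only [Matrix.sub_apply, Matrix.mul_apply]
  exact (HasDerivAt.fun_sum fun k _ => (hM k j).const_mul (A i k)).sub
    (HasDerivAt.fun_sum fun k _ => (hM i k).mul_const (A k j))

section PainleveII

variable {ψ₁ ψ₂ ψ₃ ψ₄ : ℝ → ℂ}

lemma m1_eq_zero_iff {y : ℝ} :
    m1 ψ₁ ψ₂ ψ₃ ψ₄ y = 0 ↔ ψ₁ y = 0 ∧ ψ₂ y = 0 ∧ ψ₃ y = 0 ∧ ψ₄ y = 0 := by
  constructor
  · intro h
    exact ⟨congrFun₂ h 0 0, congrFun₂ h 0 1, congrFun₂ h 0 2, congrFun₂ h 2 2⟩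
  · rintro ⟨h₁, h₂, h₃, h₄⟩
    ext i j
    fin_cases i <;> fin_cases j <;> simp [m1, h₁, h₂, h₃, h₄]

variable (ψ₁ ψ₂ ψ₃ ψ₄) in
lemma m1'_eq : m1' ψ₁ ψ₂ ψ₃ ψ₄ = m1 (deriv ψ₁) (deriv ψ₂) (deriv ψ₃) (deriv ψ₄) := by
  funext y
  ext i j
  fin_cases i <;> fin_cases j <;> simp [m1', m1, deriv_conj]

lemma hasDerivAt_m1_apply (h₁ : Differentiable ℝ ψ₁) (h₂ : Differentiable ℝ ψ₂)
    (h₃ : Differentiable ℝ ψ₃) (h₄ : Differentiable ℝ ψ₄) (y : ℝ) (i j : Fin 3) :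
    HasDerivAt (fun t => m1 ψ₁ ψ₂ ψ₃ ψ₄ t i j) (m1' ψ₁ ψ₂ ψ₃ ψ₄ y i j) y := by
  refine DifferentiableAt.hasDerivAt ?_
  fin_cases i <;> fin_cases j <;> simp [m1] <;> fun_prop

variable (ψ₁ ψ₂ ψ₃ ψ₄) in
lemma DzU_eq (y : ℝ) (z : ℂ) : DzU ψ₁ ψ₂ ψ₃ ψ₄ y z = (-I) • Lam := by
  ext i j
  have h : HasDerivAt (fun z' => Umat ψ₁ ψ₂ ψ₃ ψ₄ y z' i j) (-I * 1 * Lam i j) z := by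
    simp only [Umat, Matrix.add_apply, Matrix.smul_apply, smul_eq_mul]
    exact (((hasDerivAt_id' z).const_mul (-I)).mul_const (Lam i j)).add_const _
  simpa [DzU] using h.deriv

lemma DyV_eq (h₁ : Differentiable ℝ ψ₁) (h₂ : Differentiable ℝ ψ₂)
    (h₃ : Differentiable ℝ ψ₃) (h₄ : Differentiable ℝ ψ₄)
    (h₁' : Differentiable ℝ (deriv ψ₁)) (h₂' : Differentiable ℝ (deriv ψ₂))
    (h₃' : Differentiable ℝ (deriv ψ₃)) (h₄' : Differentiable ℝ (deriv ψ₄)) (y : ℝ) (z : ℂ) :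
    DyV ψ₁ ψ₂ ψ₃ ψ₄ y z =
      (-(4 * I * z)) • (Lam * m1' ψ₁ ψ₂ ψ₃ ψ₄ y - m1' ψ₁ ψ₂ ψ₃ ψ₄ y * Lam) +
        (4 : ℂ) • m1' (deriv ψ₁) (deriv ψ₂) (deriv ψ₃) (deriv ψ₄) y - I • Lam := by
  ext i j
  have hcomm := hasDerivAt_commutator_apply Lam (hasDerivAt_m1_apply h₁ h₂ h₃ h₄ y) i j
  have hm1' := hasDerivAt_m1_apply h₁' h₂' h₃' h₄' y i j
  rw [← m1'_eq] at hm1'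
  have hy : HasDerivAt (fun t : ℝ => I * (t : ℂ) * Lam i j) (I * 1 * Lam i j) y :=
    (ofRealCLM.hasDerivAt.const_mul I).mul_const (Lam i j)
  have h := (((hasDerivAt_const y (4 * I * z ^ 2 * Lam i j)).sub
    (hcomm.const_mul (4 * I * z))).add (hm1'.const_mul 4)).sub hy
  simp only [DyV, Vmat, Matrix.of_apply, Matrix.add_apply, Matrix.sub_apply, Matrix.smul_apply,
    smul_eq_mul]
  exact h.deriv.trans (by rw [Matrix.sub_apply]; ring)

lemma zeroCurvature_eq (h₁ : Differentiable ℝ ψ₁) (h₂ : Differentiable ℝ ψ₂)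
    (h₃ : Differentiable ℝ ψ₃) (h₄ : Differentiable ℝ ψ₄)
    (h₁' : Differentiable ℝ (deriv ψ₁)) (h₂' : Differentiable ℝ (deriv ψ₂))
    (h₃' : Differentiable ℝ (deriv ψ₃)) (h₄' : Differentiable ℝ (deriv ψ₄)) (y : ℝ) (z : ℂ) :
    DzU ψ₁ ψ₂ ψ₃ ψ₄ y z - DyV ψ₁ ψ₂ ψ₃ ψ₄ y z +
        (Umat ψ₁ ψ₂ ψ₃ ψ₄ y z * Vmat ψ₁ ψ₂ ψ₃ ψ₄ y z -
          Vmat ψ₁ ψ₂ ψ₃ ψ₄ y z * Umat ψ₁ ψ₂ ψ₃ ψ₄ y z) =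
      (-4 : ℂ) • m1' (deriv ψ₁) (deriv ψ₂) (deriv ψ₃) (deriv ψ₄) y +
        (4 * I) • ((Lam * m1 ψ₁ ψ₂ ψ₃ ψ₄ y - m1 ψ₁ ψ₂ ψ₃ ψ₄ y * Lam) * m1' ψ₁ ψ₂ ψ₃ ψ₄ y -
          m1' ψ₁ ψ₂ ψ₃ ψ₄ y * (Lam * m1 ψ₁ ψ₂ ψ₃ ψ₄ y - m1 ψ₁ ψ₂ ψ₃ ψ₄ y * Lam)) +
        (y : ℂ) • ((Lam * m1 ψ₁ ψ₂ ψ₃ ψ₄ y - m1 ψ₁ ψ₂ ψ₃ ψ₄ y * Lam) * Lam -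
          Lam * (Lam * m1 ψ₁ ψ₂ ψ₃ ψ₄ y - m1 ψ₁ ψ₂ ψ₃ ψ₄ y * Lam)) := by
  rw [DzU_eq, DyV_eq h₁ h₂ h₃ h₄ h₁' h₂' h₃' h₄']
  exact zeroCurvature_identity _ _ _ _ _ _

lemma curvature_eq_smul_m1 {y : ℝ} (h₃ : DifferentiableAt ℝ ψ₃ y)
    (him₁ : ∀ t, (ψ₁ t).re = 0) (him₄ : ∀ t, (ψ₄ t).re = 0) :
    (-4 : ℂ) • m1' (deriv ψ₁) (deriv ψ₂) (deriv ψ₃) (deriv ψ₄) y +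
        (4 * I) • ((Lam * m1 ψ₁ ψ₂ ψ₃ ψ₄ y - m1 ψ₁ ψ₂ ψ₃ ψ₄ y * Lam) * m1' ψ₁ ψ₂ ψ₃ ψ₄ y -
          m1' ψ₁ ψ₂ ψ₃ ψ₄ y * (Lam * m1 ψ₁ ψ₂ ψ₃ ψ₄ y - m1 ψ₁ ψ₂ ψ₃ ψ₄ y * Lam)) +
        (y : ℂ) • ((Lam * m1 ψ₁ ψ₂ ψ₃ ψ₄ y - m1 ψ₁ ψ₂ ψ₃ ψ₄ y * Lam) * Lam -
          Lam * (Lam * m1 ψ₁ ψ₂ ψ₃ ψ₄ y - m1 ψ₁ ψ₂ ψ₃ ψ₄ y * Lam)) =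
      (-4 : ℂ) • m1
        (fun t => deriv (deriv ψ₁) t + 2 * I * deriv (fun t' => ψ₃ t' * conj (ψ₃ t')) t)
        (fun t => deriv (deriv ψ₂) t - 4 * I * ψ₃ t * deriv ψ₃ t)
        (fun t => deriv (deriv ψ₃) t - 2 * I * conj (ψ₃ t) * deriv ψ₂ t +
          ψ₃ t * ((t : ℂ) + 2 * I * deriv ψ₁ t - 2 * I * deriv ψ₄ t))
        (fun t => deriv (deriv ψ₄) t - 4 * I * deriv (fun t' => ψ₃ t' * conj (ψ₃ t')) t) y := by
  rw [m1'_eq, m1'_eq]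
  ext i j
  fin_cases i <;> fin_cases j <;>
    simp [m1, Lam, map_ofNat, deriv_mul_conj h₃,
      conj_deriv_of_re_eq_zero him₁, conj_deriv_of_re_eq_zero him₄] <;>
    ring

end PainleveII

/-- The zero-curvature equation `∂_z𝒰 - ∂_y𝒱 + [𝒰,𝒱] = 0` holds for all `y ∈ ℝ`, `z ∈ ℂ`
iff the four scalar equations for `ψ₁, ψ₂, ψ₃, ψ₄` hold for all `y ∈ ℝ`. -/
theorem painleveII_zero_curvature (ψ₁ ψ₂ ψ₃ ψ₄ : ℝ → ℂ)
    (h₁ : ContDiff ℝ 2 ψ₁) (h₂ : ContDiff ℝ 2 ψ₂)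
    (h₃ : ContDiff ℝ 2 ψ₃) (h₄ : ContDiff ℝ 2 ψ₄)
    (him₁ : ∀ y : ℝ, (ψ₁ y).re = 0) (him₄ : ∀ y : ℝ, (ψ₄ y).re = 0) :
    (∀ (y : ℝ) (z : ℂ),
        DzU ψ₁ ψ₂ ψ₃ ψ₄ y z - DyV ψ₁ ψ₂ ψ₃ ψ₄ y z +
          (Umat ψ₁ ψ₂ ψ₃ ψ₄ y z * Vmat ψ₁ ψ₂ ψ₃ ψ₄ y z -
            Vmat ψ₁ ψ₂ ψ₃ ψ₄ y z * Umat ψ₁ ψ₂ ψ₃ ψ₄ y z) = 0) ↔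
    ((∀ y : ℝ, deriv (deriv ψ₁) y +
        2 * Complex.I * deriv (fun y' => ψ₃ y' * conj (ψ₃ y')) y = 0) ∧
     (∀ y : ℝ, deriv (deriv ψ₂) y - 4 * Complex.I * ψ₃ y * deriv ψ₃ y = 0) ∧
     (∀ y : ℝ, deriv (deriv ψ₃) y - 2 * Complex.I * conj (ψ₃ y) * deriv ψ₂ y +
        ψ₃ y * ((y : ℂ) + 2 * Complex.I * deriv ψ₁ y - 2 * Complex.I * deriv ψ₄ y) = 0) ∧
     (∀ y : ℝ, deriv (deriv ψ₄) y -
        4 * Complex.I * deriv (fun y' => ψ₃ y' * conj (ψ₃ y')) y = 0)) := by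
  have hd₃ := h₃.differentiable two_ne_zero
  simp only [zeroCurvature_eq (h₁.differentiable two_ne_zero) (h₂.differentiable two_ne_zero) hd₃
      (h₄.differentiable two_ne_zero) h₁.differentiable_deriv_two h₂.differentiable_deriv_two
      h₃.differentiable_deriv_two h₄.differentiable_deriv_two,
    curvature_eq_smul_m1 (hd₃ _) him₁ him₄, smul_eq_zero, m1_eq_zero_iff]
  norm_num [forall_and]
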